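/- For every integer n ≥ 3 and every real t ≠ 0, the moment-generating function of distance satisfies M(n,t) = (2n/(π(4+t²))) · ( 2(e^{tπ/n} − 1)/t + tan(π/n) · (e^{tπ/2} − e^{tπ/n}) ). -/

import Mathlib

open MeasureTheory

noncomputable def mgfM (n : ℕ) (t : ℝ) : ℝ :=
  ((n : ℝ) ^ 2 / (2 * Real.pi ^ 2)) *
    ∫ θ₂ in (-(Real.pi / n))..(Real.pi / n),
      ∫ θ₁ in (-(Real.pi / n))..(Real.pi / n),
        ∫ η in (0 : ℝ)..(Real.pi / 2),
          Real.exp (t * Real.arccos (Real.cos θ₁ * Real.cos η)) * Real.cos η * Real.sin η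

open Real Set

/-! For fixed `θ₁`, the substitution `φ = arccos (cos θ₁ cos η)` makes the `η`-integral elementary:
`P = expSinCosPrimitive t` is a primitive of `exp (t φ) sin φ cos φ`, and
`d/dη P (arccos (c cos η)) = c² exp (t φ) cos η sin η`. This leaves
`(P (π/2) - P |θ₁|) / cos² θ₁`, which is even in `θ₁` and has the explicit primitive
`((e^{tπ/2} - e^{tθ}) tan θ + 2 e^{tθ} / t) / (t² + 4)` on `[0, π/n]`; the `θ₂`-integral only
contributes the factor `2π/n`. -/

theorem Function.Even.intervalIntegral_neg_eq_two_nsmul {E : Type*} [NormedAddCommGroup E]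
    [NormedSpace ℝ E] {f : ℝ → E} (hf : f.Even) {a : ℝ}
    (hint : IntervalIntegrable f volume 0 a) :
    ∫ x in -a..a, f x = 2 • ∫ x in 0..a, f x := by
  have hleft : ∫ x in -a..0, f x = ∫ x in 0..a, f x := by
    simpa [hf _] using (intervalIntegral.integral_comp_neg (a := 0) (b := a) f).symm
  have hint' : IntervalIntegrable f volume (-a) 0 := by
    simpa [hf _] using ((IntervalIntegrable.iff_comp_neg).mp hint).symm
  rw [← intervalIntegral.integral_add_adjacent_intervals hint' hint, hleft, two_nsmul]

noncomputable def expSinCosPrimitive (t φ : ℝ) : ℝ :=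
  exp (t * φ) * (t * sin (2 * φ) - 2 * cos (2 * φ)) / (2 * (t ^ 2 + 4))

@[fun_prop]
theorem continuous_expSinCosPrimitive (t : ℝ) : Continuous (expSinCosPrimitive t) := by
  unfold expSinCosPrimitive; fun_prop

theorem hasDerivAt_expSinCosPrimitive (t φ : ℝ) :
    HasDerivAt (expSinCosPrimitive t) (exp (t * φ) * sin φ * cos φ) φ := by
  have hlin (k : ℝ) : HasDerivAt (fun x : ℝ => k * x) k φ := by
    simpa using (hasDerivAt_id φ).const_mul k
  have h := (((hlin t).exp.mul ((((hlin 2).sin).const_mul t).sub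
    (((hlin 2).cos).const_mul 2))).div_const (2 * (t ^ 2 + 4)))
  refine h.congr_deriv ?_
  simp only [Pi.sub_apply, sin_two_mul]
  field_simp
  ring

theorem integral_exp_arccos_mul_cos_mul_cos_mul_sin (t : ℝ) {c : ℝ} (hc : c ≠ 0)
    (hc1 : |c| ≤ 1) :
    ∫ η in (0 : ℝ)..(π / 2), exp (t * arccos (c * cos η)) * cos η * sin η
      = (expSinCosPrimitive t (π / 2) - expSinCosPrimitive t (arccos c)) / c ^ 2 := by
  rw [intervalIntegral.integral_eq_sub_of_hasDerivAt_of_le (by positivity)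
    (f := fun η => expSinCosPrimitive t (arccos (c * cos η)) / c ^ 2)
    (by fun_prop) ?deriv (by apply Continuous.intervalIntegrable; fun_prop)]
  · simp only [cos_pi_div_two, mul_zero, arccos_zero, cos_zero, mul_one]
    ring
  intro η hη
  have hcos : 0 < cos η ∧ cos η < 1 := by
    refine ⟨cos_pos_of_mem_Ioo ⟨by linarith [pi_pos, hη.1], hη.2⟩, ?_⟩
    simpa using cos_lt_cos_of_nonneg_of_le_pi_div_two le_rfl hη.2.le hη.1
  have hx : |c * cos η| < 1 := by
    rw [abs_mul, abs_of_pos hcos.1]; nlinarith [abs_nonneg c]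
  rw [abs_lt] at hx
  have hroot : √(1 - c ^ 2 * cos η ^ 2) ≠ 0 := (sqrt_pos.2 (by nlinarith)).ne'
  have h := ((hasDerivAt_expSinCosPrimitive t _).comp η
    ((hasDerivAt_arccos hx.1.ne' hx.2.ne).comp η ((hasDerivAt_cos η).const_mul c))).div_const (c ^ 2)
  refine h.congr_deriv ?_
  simp only [Function.comp_apply, sin_arccos, cos_arccos hx.1.le hx.2.le]
  field_simp

theorem integral_expSinCosPrimitive_sub_div_cos_sq (t : ℝ) (ht : t ≠ 0) {a : ℝ}
    (ha : |a| < π / 2) :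
    ∫ θ in (0 : ℝ)..a, (expSinCosPrimitive t (π / 2) - expSinCosPrimitive t θ) / cos θ ^ 2
      = ((exp (t * (π / 2)) - exp (t * a)) * tan a + 2 * (exp (t * a) - 1) / t)
          / (t ^ 2 + 4) := by
  have hcos : ∀ θ ∈ uIcc 0 a, cos θ ≠ 0 := fun θ hθ =>
    (cos_pos_of_mem_Ioo (abs_lt.mp ((show |θ| ≤ |a| by simpa using abs_sub_left_of_mem_uIcc hθ).trans_lt ha))).ne'
  have hderiv : ∀ θ ∈ uIcc 0 a, HasDerivAt
      (fun θ => ((exp (t * (π / 2)) - exp (t * θ)) * tan θ + 2 * exp (t * θ) / t) / (t ^ 2 + 4))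
      ((expSinCosPrimitive t (π / 2) - expSinCosPrimitive t θ) / cos θ ^ 2) θ := by
    intro θ hθ
    have hexp : HasDerivAt (fun x => exp (t * x)) (exp (t * θ) * t) θ := by
      simpa using ((hasDerivAt_id θ).const_mul t).exp
    have htan := hasDerivAt_tan (hcos θ hθ)
    refine ((((hexp.const_sub _).mul htan).add ((hexp.const_mul 2).div_const t)).div_const _
      ).congr_deriv ?_
    simp only [expSinCosPrimitive, tan_eq_sin_div_cos, sin_two_mul, cos_two_mul,
      show 2 * (π / 2) = π by ring, sin_pi, cos_pi]
    field_simp [hcos θ hθ]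
    ring
  have hint : IntervalIntegrable
      (fun θ => (expSinCosPrimitive t (π / 2) - expSinCosPrimitive t θ) / cos θ ^ 2) volume 0 a :=
    (ContinuousOn.div (by fun_prop) (by fun_prop)
      fun θ hθ => pow_ne_zero 2 (hcos θ hθ)).intervalIntegrable
  rw [intervalIntegral.integral_eq_sub_of_hasDerivAt hderiv hint]
  simp only [mul_zero, exp_zero, tan_zero]
  field_simp
  ring

theorem integral_expSinCosPrimitive_sub_arccos_cos_div_cos_sq (t : ℝ) (ht : t ≠ 0) {a : ℝ}
    (ha0 : 0 ≤ a) (ha : a < π / 2) :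
    ∫ θ in -a..a,
        (expSinCosPrimitive t (π / 2) - expSinCosPrimitive t (arccos (cos θ))) / cos θ ^ 2
      = 2 * (((exp (t * (π / 2)) - exp (t * a)) * tan a + 2 * (exp (t * a) - 1) / t)
          / (t ^ 2 + 4)) := by
  have habs : |a| < π / 2 := by rwa [abs_of_nonneg ha0]
  have hcongr : EqOn
      (fun θ => (expSinCosPrimitive t (π / 2) - expSinCosPrimitive t (arccos (cos θ))) / cos θ ^ 2)
      (fun θ => (expSinCosPrimitive t (π / 2) - expSinCosPrimitive t θ) / cos θ ^ 2)
      (uIcc 0 a) := by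
    intro θ hθ
    rw [uIcc_of_le ha0] at hθ
    simp only [arccos_cos hθ.1 (hθ.2.trans (by linarith [pi_pos]))]
  have heven : Function.Even
      (fun θ => (expSinCosPrimitive t (π / 2) - expSinCosPrimitive t (arccos (cos θ))) / cos θ ^ 2) :=
    fun θ => by simp only [cos_neg]
  rw [heven.intervalIntegral_neg_eq_two_nsmul, intervalIntegral.integral_congr hcongr,
    integral_expSinCosPrimitive_sub_div_cos_sq t ht habs, nsmul_eq_mul, Nat.cast_ofNat]
  refine (ContinuousOn.div (by fun_prop) (by fun_prop) fun θ hθ => ?_).intervalIntegrable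
  rw [uIcc_of_le ha0] at hθ
  exact pow_ne_zero 2 (cos_pos_of_mem_Ioo ⟨by linarith [pi_pos, hθ.1], hθ.2.trans_lt ha⟩).ne'

theorem mgf_formula (n : ℕ) (hn : 3 ≤ n) (t : ℝ) (ht : t ≠ 0) :
    mgfM n t =
      (2 * n / (Real.pi * (4 + t ^ 2))) *
        ( 2 * (Real.exp (t * Real.pi / n) - 1) / t
          + Real.tan (Real.pi / n) *
              (Real.exp (t * Real.pi / 2) - Real.exp (t * Real.pi / n)) ) := by
  have ha0 : 0 ≤ π / n := by positivity
  have ha : π / n < π / 2 :=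
    div_lt_div_of_pos_left pi_pos two_pos (by exact_mod_cast (by omega : 2 < n))
  have hinner : ∀ θ ∈ uIcc (-(π / n)) (π / n),
      ∫ η in (0 : ℝ)..(π / 2), exp (t * arccos (cos θ * cos η)) * cos η * sin η
        = (expSinCosPrimitive t (π / 2) - expSinCosPrimitive t (arccos (cos θ))) / cos θ ^ 2 := by
    intro θ hθ
    rw [uIcc_of_le (by linarith)] at hθ
    have hcos : 0 < cos θ := cos_pos_of_mem_Ioo ⟨by linarith [hθ.1], hθ.2.trans_lt ha⟩
    exact integral_exp_arccos_mul_cos_mul_cos_mul_sin t hcos.ne' (abs_cos_le_one θ)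
  rw [mgfM, intervalIntegral.integral_congr hinner,
    integral_expSinCosPrimitive_sub_arccos_cos_div_cos_sq t ht ha0 ha,
    intervalIntegral.integral_const, smul_eq_mul]
  field_simp
  ring_nf
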